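/- Let ĝ = V^{-1} g be two conformally related metrics, K̂_{ab} a Killing tensor for ĝ with trace-free part k_{ab}, and suppose there is a Killing tensor for g also with trace-free part k_{ab}. Then the 1-form K̂^b{}_a (dV)_b is closed: d(K̂^b{}_a(dV)_b dx^a) = 0 (the Bertrand–Darboux / dKdV equation). -/

import Mathlib

noncomputable section
open scoped BigOperators

/-- Partial derivative `∂ᵢ f` of a real-valued function on the chart `Fin n → ℝ`. -/
def pd {n : ℕ} (i : Fin n) (f : (Fin n → ℝ) → ℝ) (x : Fin n → ℝ) : ℝ :=
  fderiv ℝ f x (fun j => if j = i then (1 : ℝ) else 0)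

/-- A pseudo-Riemannian metric on the global chart `Fin n → ℝ`. -/
structure PseudoRiemMetric (n : ℕ) where
  g : (Fin n → ℝ) → Fin n → Fin n → ℝ
  ginv : (Fin n → ℝ) → Fin n → Fin n → ℝ
  symm : ∀ x a b, g x a b = g x b a
  invl : ∀ x a b, (∑ c, ginv x a c * g x c b) = if a = b then (1 : ℝ) else 0
  smooth_g : ∀ a b, ContDiff ℝ (⊤ : ℕ∞) fun x => g x a b
  smooth_ginv : ∀ a b, ContDiff ℝ (⊤ : ℕ∞) fun x => ginv x a b

namespace PseudoRiemMetric

variable {n : ℕ} (M : PseudoRiemMetric n)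

/-- Christoffel symbols `Γ^a_{bc}` of the Levi-Civita connection. -/
def Γ (x : Fin n → ℝ) (a b c : Fin n) : ℝ :=
  (1 / 2) * ∑ d, M.ginv x a d *
    (pd b (fun y => M.g y d c) x + pd c (fun y => M.g y d b) x - pd d (fun y => M.g y b c) x)

/-- Covariant derivative `∇_a k_b` of a 1-form. -/
def covD1 (k : (Fin n → ℝ) → Fin n → ℝ) (x : Fin n → ℝ) (a b : Fin n) : ℝ :=
  pd a (fun y => k y b) x - ∑ c, M.Γ x c a b * k x c

/-- Covariant derivative `∇_a v^b` of a vector field. -/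
def covDvec (v : (Fin n → ℝ) → Fin n → ℝ) (x : Fin n → ℝ) (a b : Fin n) : ℝ :=
  pd a (fun y => v y b) x + ∑ c, M.Γ x b a c * v x c

/-- Covariant derivative `∇_a k_{bc}` of a covariant 2-tensor. -/
def covD2 (k : (Fin n → ℝ) → Fin n → Fin n → ℝ) (x : Fin n → ℝ) (a b c : Fin n) : ℝ :=
  pd a (fun y => k y b c) x - (∑ d, M.Γ x d a b * k x d c) - ∑ d, M.Γ x d a c * k x b d

/-- Divergence `∇_a v^a` of a vector field. -/
def divVec (v : (Fin n → ℝ) → Fin n → ℝ) (x : Fin n → ℝ) : ℝ :=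
  ∑ a, M.covDvec v x a a

/-- Laplacian `Δf = g^{ac} ∇_a ∇_c f` of a function. -/
def lap0 (f : (Fin n → ℝ) → ℝ) (x : Fin n → ℝ) : ℝ :=
  ∑ a, ∑ c, M.ginv x a c * M.covD1 (fun y b => pd b f y) x a c

/-- Laplacian `Δk_b = g^{ac} ∇_a ∇_c k_b` of a 1-form. -/
def lap1 (k : (Fin n → ℝ) → Fin n → ℝ) (x : Fin n → ℝ) (b : Fin n) : ℝ :=
  ∑ a, ∑ c, M.ginv x a c * M.covD2 (fun y p q => M.covD1 k y p q) x a c b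

/-- Riemann curvature `R_{ab}{}^c{}_d`, with the convention
`R_{ab}{}^c{}_d X^d = ∇_a ∇_b X^c - ∇_b ∇_a X^c`. -/
def Riem (x : Fin n → ℝ) (a b c d : Fin n) : ℝ :=
  pd a (fun y => M.Γ y c b d) x - pd b (fun y => M.Γ y c a d) x
    + (∑ e, M.Γ x c a e * M.Γ x e b d) - ∑ e, M.Γ x c b e * M.Γ x e a d

/-- Ricci curvature `R_{bd} = R_{ab}{}^a{}_d`. -/
def Ricci (x : Fin n → ℝ) (b d : Fin n) : ℝ := ∑ a, M.Riem x a b a d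

/-- Scalar curvature. -/
def scal (x : Fin n → ℝ) : ℝ := ∑ b, ∑ d, M.ginv x b d * M.Ricci x b d

/-- Trace of the Schouten tensor, `J = Scal/(2(n-1))`. -/
def Jsc (x : Fin n → ℝ) : ℝ := (1 / (2 * ((n : ℝ) - 1))) * M.scal x

/-- Schouten tensor, `P_{ab} = (Ric_{ab} - J g_{ab})/(n-2)`. -/
def Schouten (x : Fin n → ℝ) (a b : Fin n) : ℝ :=
  (1 / ((n : ℝ) - 2)) * (M.Ricci x a b - M.Jsc x * M.g x a b)

end PseudoRiemMetric

/-!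
Put `ρ = V · tr_ĝ K̂ / n - μ`, so that the `g`-Killing tensor with trace-free part `k` is
`V² K̂ - ρ g`. The Christoffel symbols of `ĝ = V⁻¹ g` differ from those of `g` by terms linear
in `dV`, so subtracting `V²` times the `ĝ`-Killing equation of `K̂` from the `g`-Killing equation
of `V² K̂ - ρ g` leaves the symmetrisation of `g ⊗ (V K̂(grad V, ·) - dρ)`; a trace shows that
this one-form vanishes. As `K̂^b{}_a (dV)_b = V K̂(grad V, ·)_a`, the one-form is `dρ`, closed
because second partial derivatives commute.
-/

open Finset

section PartialDerivatives

variable {n : ℕ} {f g : (Fin n → ℝ) → ℝ} {x : Fin n → ℝ}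

lemma pd_sub (i : Fin n) (hf : DifferentiableAt ℝ f x) (hg : DifferentiableAt ℝ g x) :
    pd i (fun y => f y - g y) x = pd i f x - pd i g x := by
  simp [pd, fderiv_fun_sub hf hg]

lemma pd_mul (i : Fin n) (hf : DifferentiableAt ℝ f x) (hg : DifferentiableAt ℝ g x) :
    pd i (fun y => f y * g y) x = pd i f x * g x + f x * pd i g x := by
  simp [pd, fderiv_fun_mul hf hg]
  ring

lemma pd_pd_comm (hf : ContDiff ℝ 2 f) (x : Fin n → ℝ) (i j : Fin n) :
    pd i (fun y => pd j f y) x = pd j (fun y => pd i f y) x := by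
  have hdf : Differentiable ℝ (fderiv ℝ f) :=
    (hf.fderiv_right (m := 1) (by norm_num)).differentiable (by norm_num)
  have hsymm : IsSymmSndFDerivAt ℝ f x :=
    hf.contDiffAt.isSymmSndFDerivAt (by simp [minSmoothness_of_isRCLikeNormedField])
  simpa [pd, fderiv_clm_apply (hdf x) (differentiableAt_const _)] using hsymm _ _

end PartialDerivatives

namespace PseudoRiemMetric

variable {n : ℕ}

section Metric

variable (M : PseudoRiemMetric n) (x : Fin n → ℝ)

lemma ginv_mul_g_matrix : Matrix.of (M.ginv x) * Matrix.of (M.g x) = 1 := by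
  ext a b
  simpa [Matrix.mul_apply, Matrix.one_apply] using M.invl x a b

lemma ginv_matrix_eq_inv : Matrix.of (M.ginv x) = (Matrix.of (M.g x))⁻¹ :=
  (Matrix.inv_eq_left_inv (M.ginv_mul_g_matrix x)).symm

lemma g_mul_ginv (a b : Fin n) :
    ∑ c, M.g x a c * M.ginv x c b = if a = b then 1 else 0 := by
  have h := congrArg (fun A => A a b) (mul_eq_one_comm.mp (M.ginv_mul_g_matrix x))
  simpa [Matrix.mul_apply, Matrix.one_apply] using h

lemma ginv_symm (a b : Fin n) : M.ginv x a b = M.ginv x b a := by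
  have hg : (Matrix.of (M.g x)).transpose = Matrix.of (M.g x) := by
    ext a b
    exact M.symm x b a
  have h := congrFun₂ (M.ginv_matrix_eq_inv x) a b
  rwa [← hg, ← Matrix.transpose_nonsing_inv, Matrix.transpose_apply,
    ← M.ginv_matrix_eq_inv] at h

lemma sum_ginv_mul_g_mul_left (u : Fin n → ℝ) (a : Fin n) :
    ∑ b, ∑ c, M.ginv x b c * M.g x a b * u c = u a := by
  rw [sum_comm]
  simp_rw [← sum_mul, mul_comm (M.ginv x _ _), M.g_mul_ginv]
  simp

lemma sum_ginv_mul_g_mul_right (u : Fin n → ℝ) (a : Fin n) :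
    ∑ b, ∑ c, M.ginv x b c * M.g x c a * u b = u a := by
  simp_rw [← sum_mul, M.invl]
  simp

lemma sum_ginv_mul_g : ∑ b, ∑ c, M.ginv x b c * M.g x b c = n := by
  have h b : ∑ c, M.ginv x b c * M.g x b c = 1 := by simpa [M.symm x b] using M.invl x b b
  simp [h]

lemma eq_zero_of_cyclic_g_mul_eq_zero {X : Fin n → ℝ}
    (h : ∀ a b c, M.g x b c * X a + M.g x c a * X b + M.g x a b * X c = 0) (a : Fin n) :
    X a = 0 := by
  have htrace : ∑ b, ∑ c, M.ginv x b c * (M.g x b c * X a + M.g x c a * X b + M.g x a b * X c)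
      = (n + 2) * X a := by
    simp only [mul_add, sum_add_distrib, ← mul_assoc]
    rw [M.sum_ginv_mul_g_mul_left, M.sum_ginv_mul_g_mul_right]
    simp only [← sum_mul, M.sum_ginv_mul_g]
    ring
  simp only [h, mul_zero, sum_const_zero] at htrace
  have : (n : ℝ) + 2 ≠ 0 := by positivity
  exact (mul_eq_zero.mp htrace.symm).resolve_left this

lemma pd_g_symm (i a b : Fin n) :
    pd i (fun y => M.g y a b) x = pd i (fun y => M.g y b a) x := by
  simp_rw [M.symm _ a b]

lemma sum_Γ_mul_g (a b c : Fin n) :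
    ∑ d, M.Γ x d a b * M.g x d c
      = (pd a (fun y => M.g y c b) x + pd b (fun y => M.g y c a) x
          - pd c (fun y => M.g y a b) x) / 2 := by
  rw [← M.sum_ginv_mul_g_mul_right x (fun e => pd a (fun y => M.g y e b) x
    + pd b (fun y => M.g y e a) x - pd e (fun y => M.g y a b) x) c]
  simp only [Γ, mul_sum, sum_mul, sum_div]
  rw [sum_comm]
  refine sum_congr rfl fun e _ => sum_congr rfl fun d _ => ?_
  rw [M.ginv_symm x d e]
  ring

lemma covD2_g (a b c : Fin n) : M.covD2 M.g x a b c = 0 := by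
  simp only [covD2, M.symm x b, sum_Γ_mul_g]
  rw [M.pd_g_symm x a c b, M.pd_g_symm x b c a, M.pd_g_symm x c a b, M.pd_g_symm x a b c]
  ring

end Metric

section Leibniz

variable (M : PseudoRiemMetric n) {x : Fin n → ℝ}

lemma covD2_sub {K L : (Fin n → ℝ) → Fin n → Fin n → ℝ} (a b c : Fin n)
    (hK : DifferentiableAt ℝ (fun y => K y b c) x) (hL : DifferentiableAt ℝ (fun y => L y b c) x) :
    M.covD2 (fun y p q => K y p q - L y p q) x a b c = M.covD2 K x a b c - M.covD2 L x a b c := by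
  simp only [covD2, pd_sub a hK hL, mul_sub, sum_sub_distrib]
  ring

lemma covD2_fun_mul {f : (Fin n → ℝ) → ℝ} {K : (Fin n → ℝ) → Fin n → Fin n → ℝ} (a b c : Fin n)
    (hf : DifferentiableAt ℝ f x) (hK : DifferentiableAt ℝ (fun y => K y b c) x) :
    M.covD2 (fun y p q => f y * K y p q) x a b c
      = pd a f x * K x b c + f x * M.covD2 K x a b c := by
  simp only [covD2, pd_mul a hf hK, mul_sub, mul_sum]
  simp_rw [mul_left_comm (f x)]
  ring

lemma covD2_sq_mul_sub_mul_g {V ρ : (Fin n → ℝ) → ℝ} {K : (Fin n → ℝ) → Fin n → Fin n → ℝ}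
    (a b c : Fin n) (hV : DifferentiableAt ℝ V x) (hρ : DifferentiableAt ℝ ρ x)
    (hK : DifferentiableAt ℝ (fun y => K y b c) x) :
    M.covD2 (fun y p q => V y ^ 2 * K y p q - ρ y * M.g y p q) x a b c
      = V x ^ 2 * M.covD2 K x a b c + 2 * V x * pd a V x * K x b c
        - pd a ρ x * M.g x b c := by
  have hg : DifferentiableAt ℝ (fun y => M.g y b c) x :=
    ((M.smooth_g b c).differentiable (by simp)).differentiableAt
  have hV2 : pd a (fun y => V y ^ 2) x = 2 * V x * pd a V x := by
    simp [pd, fderiv_fun_pow 2 hV]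
  rw [M.covD2_sub a b c (by fun_prop) (by fun_prop), M.covD2_fun_mul a b c (by fun_prop) hK,
    M.covD2_fun_mul a b c hρ hg, M.covD2_g, hV2]
  ring

end Leibniz

def gradContract (M : PseudoRiemMetric n) (f : (Fin n → ℝ) → ℝ)
    (K : (Fin n → ℝ) → Fin n → Fin n → ℝ) (x : Fin n → ℝ) (a : Fin n) : ℝ :=
  ∑ b, ∑ c, M.ginv x b c * pd b f x * K x c a

def IsKillingTensor (M : PseudoRiemMetric n) (K : (Fin n → ℝ) → Fin n → Fin n → ℝ) : Prop :=
  ∀ x a b c, M.covD2 K x a b c + M.covD2 K x b c a + M.covD2 K x c a b = 0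

section Conformal

variable {M M' : PseudoRiemMetric n} {V : (Fin n → ℝ) → ℝ} {x : Fin n → ℝ}
  (hV0 : ∀ x, V x ≠ 0) (hconf : ∀ x a b, M'.g x a b = (V x)⁻¹ * M.g x a b)
include hV0 hconf

lemma ginv_of_conformal (a b : Fin n) : M'.ginv x a b = V x * M.ginv x a b := by
  have hg : Matrix.of (M'.g x) = (V x)⁻¹ • Matrix.of (M.g x) := by
    ext a b
    exact hconf x a b
  have h : Matrix.of (M'.ginv x) = V x • Matrix.of (M.ginv x) := by
    rw [M'.ginv_matrix_eq_inv x]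
    refine Matrix.inv_eq_left_inv ?_
    rw [hg, Matrix.smul_mul, Matrix.mul_smul, M.ginv_mul_g_matrix, smul_smul,
      mul_inv_cancel₀ (hV0 x), one_smul]
  simpa using congrArg (fun A => A a b) h

lemma pd_g_of_conformal (hV : DifferentiableAt ℝ V x) (i a b : Fin n) :
    pd i (fun y => M'.g y a b) x
      = (V x)⁻¹ * pd i (fun y => M.g y a b) x - pd i V x / V x ^ 2 * M.g x a b := by
  have hg : (fun y => M.g y a b) = fun y => V y * M'.g y a b := by
    funext y
    rw [hconf, mul_inv_cancel_left₀ (hV0 y)]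
  have hg' : DifferentiableAt ℝ (fun y => M'.g y a b) x :=
    ((M'.smooth_g a b).differentiable (by simp)).differentiableAt
  rw [hg, pd_mul i hV hg', hconf]
  field_simp [hV0 x]
  ring

lemma Γ_of_conformal (hV : DifferentiableAt ℝ V x) (a b c : Fin n) :
    M'.Γ x a b c = M.Γ x a b c
      - ((if a = b then 1 else 0) * pd c V x + (if a = c then 1 else 0) * pd b V x
          - M.g x b c * ∑ e, M.ginv x a e * pd e V x) / (2 * V x) := by
  rw [← M.invl x a b, ← M.invl x a c]
  simp only [Γ, ginv_of_conformal hV0 hconf, pd_g_of_conformal hV0 hconf hV, mul_sum, sum_mul,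
    ← sum_add_distrib, ← sum_sub_distrib, sum_div]
  refine sum_congr rfl fun d _ => ?_
  field_simp [hV0 x]
  ring

lemma sum_Γ_of_conformal_mul (hV : DifferentiableAt ℝ V x)
    (K : (Fin n → ℝ) → Fin n → Fin n → ℝ) (a b c : Fin n) :
    ∑ d, M'.Γ x d a b * K x d c
      = ∑ d, M.Γ x d a b * K x d c
        - (pd b V x * K x a c + pd a V x * K x b c - M.g x a b * M.gradContract V K x c)
          / (2 * V x) := by
  have hW : M.gradContract V K x c = ∑ d, (∑ e, M.ginv x d e * pd e V x) * K x d c := by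
    simp only [gradContract, sum_mul]
    rw [sum_comm]
    refine sum_congr rfl fun d _ => sum_congr rfl fun e _ => ?_
    rw [M.ginv_symm x d e]
  simp only [Γ_of_conformal hV0 hconf hV, sub_mul, sum_sub_distrib, div_mul_eq_mul_div,
    ← sum_div, add_mul, sum_add_distrib, hW, mul_sum, sum_mul]
  simp only [ite_mul, one_mul, zero_mul, sum_ite_eq', mem_univ, if_true, mul_assoc]

lemma covD2_of_conformal (hV : DifferentiableAt ℝ V x) {K : (Fin n → ℝ) → Fin n → Fin n → ℝ}
    (hK : ∀ a b, K x a b = K x b a) (a b c : Fin n) :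
    M'.covD2 K x a b c = M.covD2 K x a b c
      + (pd b V x * K x a c + pd c V x * K x a b + 2 * pd a V x * K x b c
          - M.g x a b * M.gradContract V K x c - M.g x a c * M.gradContract V K x b)
        / (2 * V x) := by
  have hK' : ∑ d, M'.Γ x d a c * K x b d = ∑ d, M'.Γ x d a c * K x d b := by
    simp only [hK b]
  have hK'' : ∑ d, M.Γ x d a c * K x b d = ∑ d, M.Γ x d a c * K x d b := by
    simp only [hK b]
  simp only [covD2]
  rw [hK', hK'', sum_Γ_of_conformal_mul hV0 hconf hV, sum_Γ_of_conformal_mul hV0 hconf hV,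
    hK a c, hK c b]
  ring

end Conformal

section BertrandDarboux

variable {M M' : PseudoRiemMetric n} {V ρ : (Fin n → ℝ) → ℝ}
  {K : (Fin n → ℝ) → Fin n → Fin n → ℝ}

theorem mul_gradContract_eq_pd_of_isKillingTensor (hV0 : ∀ x, V x ≠ 0)
    (hconf : ∀ x a b, M'.g x a b = (V x)⁻¹ * M.g x a b) (hV : Differentiable ℝ V)
    (hρ : Differentiable ℝ ρ) (hK : ∀ a b, Differentiable ℝ fun y => K y a b)
    (hK_symm : ∀ x a b, K x a b = K x b a) (hK' : M'.IsKillingTensor K)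
    (hKg : M.IsKillingTensor fun y p q => V y ^ 2 * K y p q - ρ y * M.g y p q)
    (x : Fin n → ℝ) (a : Fin n) :
    V x * M.gradContract V K x a = pd a ρ x := by
  have hcyc : ∀ a b c,
      M.g x b c * (V x * M.gradContract V K x a - pd a ρ x)
        + M.g x c a * (V x * M.gradContract V K x b - pd b ρ x)
        + M.g x a b * (V x * M.gradContract V K x c - pd c ρ x) = 0 := by
    intro a b c
    have h' := hK' x a b c
    have h := hKg x a b c
    simp only [covD2_of_conformal hV0 hconf (hV x) (hK_symm x)] at h'
    simp only [M.covD2_sq_mul_sub_mul_g _ _ _ (hV x) (hρ x) (hK _ _ x)] at h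
    simp only [hK_symm x b a, hK_symm x c b, hK_symm x a c, M.symm x b a, M.symm x c b,
      M.symm x a c] at h h'
    field_simp [hV0 x] at h'
    linear_combination h - V x * h' / 2
  exact sub_eq_zero.mp
    (M.eq_zero_of_cyclic_g_mul_eq_zero x (X := fun a => V x * M.gradContract V K x a - pd a ρ x)
      hcyc a)

end BertrandDarboux

end PseudoRiemMetric

theorem bertrand_darboux_general {n : ℕ} (M M' : PseudoRiemMetric n)
    (V : (Fin n → ℝ) → ℝ) (hV : ContDiff ℝ (⊤ : ℕ∞) V) (hVpos : ∀ x, 0 < V x)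
    (hconf : ∀ x a b, M'.g x a b = (V x)⁻¹ * M.g x a b)
    (Khat : (Fin n → ℝ) → Fin n → Fin n → ℝ)
    (hKhat_symm : ∀ x a b, Khat x a b = Khat x b a)
    (hKhat_smooth : ∀ a b, ContDiff ℝ (⊤ : ℕ∞) fun x => Khat x a b)
    (hKhat_killing : ∀ x a b c,
      M'.covD2 Khat x a b c + M'.covD2 Khat x b c a + M'.covD2 Khat x c a b = 0)
    (k : (Fin n → ℝ) → Fin n → Fin n → ℝ)
    (hk : ∀ x a b, k x a b
      = Khat x a b
        - ((1 / (n : ℝ)) * ∑ p, ∑ q, (V x * M.ginv x p q) * Khat x p q) * M'.g x a b)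
    (hg_killing : ∃ mu : (Fin n → ℝ) → ℝ, ContDiff ℝ (⊤ : ℕ∞) mu ∧
      ∀ x a b c,
        M.covD2 (fun y p q => (V y) ^ 2 * k y p q + mu y * M.g y p q) x a b c
          + M.covD2 (fun y p q => (V y) ^ 2 * k y p q + mu y * M.g y p q) x b c a
          + M.covD2 (fun y p q => (V y) ^ 2 * k y p q + mu y * M.g y p q) x c a b = 0) :
    ∀ x a e,
      pd e (fun y => ∑ b, ∑ c, (V y * M.ginv y b c) * Khat y c a * pd b V y) x
        = pd a (fun y => ∑ b, ∑ c, (V y * M.ginv y b c) * Khat y c e * pd b V y) x := by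
  obtain ⟨mu, hmu, hmu_killing⟩ := hg_killing
  have hV0 : ∀ x, V x ≠ 0 := fun x => (hVpos x).ne'
  set ρ : (Fin n → ℝ) → ℝ :=
    fun y => V y * ((1 / (n : ℝ)) * ∑ p, ∑ q, (V y * M.ginv y p q) * Khat y p q) - mu y
  have hρ : ContDiff ℝ (⊤ : ℕ∞) ρ := by
    have := M.smooth_ginv
    fun_prop
  have hg_Khat : (fun y p q => V y ^ 2 * k y p q + mu y * M.g y p q)
      = fun y p q => V y ^ 2 * Khat y p q - ρ y * M.g y p q := by
    funext y p q
    rw [hk, hconf]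
    field_simp [hV0 y]
    ring
  have hω : ∀ i, (fun y => ∑ b, ∑ c, (V y * M.ginv y b c) * Khat y c i * pd b V y) = pd i ρ := by
    intro i
    funext y
    rw [← PseudoRiemMetric.mul_gradContract_eq_pd_of_isKillingTensor hV0 hconf
      (hV.differentiable (by simp)) (hρ.differentiable (by simp))
      (fun a b => (hKhat_smooth a b).differentiable (by simp)) hKhat_symm hKhat_killing
      (hg_Khat ▸ hmu_killing) y i]
    simp only [PseudoRiemMetric.gradContract, mul_sum]
    refine sum_congr rfl fun b _ => sum_congr rfl fun c _ => ?_
    ring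
  intro x a e
  rw [hω a, hω e]
  exact pd_pd_comm (hρ.of_le ENat.LEInfty.out) x e a

/-- Bertrand–Darboux / dKdV: let `ĝ = V⁻¹ g`, let `K̂` be a
Killing tensor for `ĝ` with (`ĝ`-)trace-free part `k`, and suppose there is a
Killing tensor for `g` whose (weighted) trace-free part is also `k`
(i.e. equals `V² k + μ g` for some function `μ`). Then the one-form
`ω_a = K̂^b{}_a (dV)_b` (index raised with `ĝ`) is closed. -/
theorem bertrand_darboux {n : ℕ} (hn : 1 ≤ n) (M M' : PseudoRiemMetric n)
    (V : (Fin n → ℝ) → ℝ) (hV : ContDiff ℝ (⊤ : ℕ∞) V) (hVpos : ∀ x, 0 < V x)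
    (hconf : ∀ x a b, M'.g x a b = (V x)⁻¹ * M.g x a b)
    (Khat : (Fin n → ℝ) → Fin n → Fin n → ℝ)
    (hKhat_symm : ∀ x a b, Khat x a b = Khat x b a)
    (hKhat_smooth : ∀ a b, ContDiff ℝ (⊤ : ℕ∞) fun x => Khat x a b)
    (hKhat_killing : ∀ x a b c,
      M'.covD2 Khat x a b c + M'.covD2 Khat x b c a + M'.covD2 Khat x c a b = 0)
    (k : (Fin n → ℝ) → Fin n → Fin n → ℝ)
    (hk : ∀ x a b, k x a b
      = Khat x a b
        - ((1 / (n : ℝ)) * ∑ p, ∑ q, (V x * M.ginv x p q) * Khat x p q) * M'.g x a b)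
    (hg_killing : ∃ mu : (Fin n → ℝ) → ℝ, ContDiff ℝ (⊤ : ℕ∞) mu ∧
      ∀ x a b c,
        M.covD2 (fun y p q => (V y) ^ 2 * k y p q + mu y * M.g y p q) x a b c
          + M.covD2 (fun y p q => (V y) ^ 2 * k y p q + mu y * M.g y p q) x b c a
          + M.covD2 (fun y p q => (V y) ^ 2 * k y p q + mu y * M.g y p q) x c a b = 0) :
    ∀ x a e,
      pd e (fun y => ∑ b, ∑ c, (V y * M.ginv y b c) * Khat y c a * pd b V y) x
        = pd a (fun y => ∑ b, ∑ c, (V y * M.ginv y b c) * Khat y c e * pd b V y) x :=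
  bertrand_darboux_general M M' V hV hVpos hconf Khat hKhat_symm hKhat_smooth hKhat_killing k hk
    hg_killing
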